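/- arXiv:1906.12235 — 5 statements merged into one kernel-verified Lean document; each statement's English description precedes it below -/
import Mathlib

section
/- Let G be a bipartite graph without isolated vertices. Then the Grundy total domination number of G is an even number. -/
/-- `S` is a total dominating set of `G`: every vertex has a neighbor in `S`. -/
def IsTotalDomSet {V : Type*} (G : SimpleGraph V) (S : Set V) : Prop :=
  ∀ v : V, ∃ u ∈ S, G.Adj v u

/-- `l` is a legal sequence of `G`: the vertices are distinct and every vertex
(except possibly the first) totally dominates a vertex not totally dominated
by the previous vertices. -/
def IsLegalSeq {V : Type*} (G : SimpleGraph V) (l : List V) : Prop :=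
  l.Nodup ∧ ∀ i : Fin l.length, 0 < (i : ℕ) →
    ∃ w : V, G.Adj (l.get i) w ∧ ∀ j : Fin l.length, (j : ℕ) < (i : ℕ) → ¬ G.Adj (l.get j) w

/-- `l` is a total dominating sequence of `G`. -/
def IsTotalDomSeq {V : Type*} (G : SimpleGraph V) (l : List V) : Prop :=
  IsLegalSeq G l ∧ IsTotalDomSet G {v | v ∈ l}

/-- The Grundy total domination number of `G`: the maximum length of a total
dominating sequence. -/
noncomputable def grundyTotalDomNum {V : Type*} (G : SimpleGraph V) : ℕ :=
  sSup {k : ℕ | ∃ l : List V, IsTotalDomSeq G l ∧ l.length = k}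

/-- The total domination number of `G`: the minimum cardinality of a total
dominating set. -/
noncomputable def totalDomNum {V : Type*} (G : SimpleGraph V) : ℕ :=
  sInf {k : ℕ | ∃ S : Set V, IsTotalDomSet G S ∧ S.ncard = k}

/-- `A`, `B` is a bipartition of `G`. -/
def IsBipartitionOf {V : Type*} (G : SimpleGraph V) (A B : Set V) : Prop :=
  (∀ v : V, (v ∈ A ∧ v ∉ B) ∨ (v ∈ B ∧ v ∉ A)) ∧
  ∀ ⦃u v : V⦄, G.Adj u v → (u ∈ A ∧ v ∈ B) ∨ (u ∈ B ∧ v ∈ A)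

/-- `G` has no false twins: distinct vertices have distinct open neighborhoods. -/
def FalseTwinFree {V : Type*} (G : SimpleGraph V) : Prop :=
  ∀ u v : V, u ≠ v → G.neighborSet u ≠ G.neighborSet v

/-- `G` has no isolated vertices. -/
def NoIsolatedVerts {V : Type*} (G : SimpleGraph V) : Prop :=
  ∀ v : V, ∃ u : V, G.Adj v u

/-!
Let `S` be a maximum total dominating sequence of a bipartite graph with sides `A`, `B`, and
split it into its vertices `S_A` in `A` and `S_B` in `B`. Being a subsequence of `S`, `S_B` is
legal, and it totally dominates `A`. Record each vertex `v_i` of `S_B` together with a footprint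
`w_i ∈ A` (a neighbour of `v_i` not adjacent to `v_j` for `j < i`); then the footprints in reverse
order form a legal sequence in `A`, with the `v_i` as footprints. Extend it greedily until it
totally dominates `B` and append `S_B`: since vertices of `A` dominate only `B` and those of `S_B`
have their footprints in `A`, this is a total dominating sequence of length at least `2 |S_B|`.
Hence `2 |S_B| ≤ |S|`, symmetrically `2 |S_A| ≤ |S|`, and so `|S| = 2 |S_A|`.
-/

section

variable {V : Type*} {G : SimpleGraph V}

/-- A list of pairs `(v_i, w_i)` in which each `w_i` is a footprint of `v_i`: `v_i ~ w_i`, and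
`v_j ≁ w_i` for `j < i`. -/
def IsFootprintSeq (G : SimpleGraph V) (p : List (V × V)) : Prop :=
  (∀ x ∈ p, G.Adj x.1 x.2) ∧ p.Pairwise fun x y => ¬ G.Adj x.1 y.2

namespace IsFootprintSeq

variable {p q : List (V × V)}

theorem nodup_map_fst (hp : IsFootprintSeq G p) : (p.map Prod.fst).Nodup := by
  rw [List.Nodup, List.pairwise_map]
  exact hp.2.imp_of_mem fun _ hy hxy heq => hxy (heq ▸ hp.1 _ hy)

theorem length_le_card [Fintype V] (hp : IsFootprintSeq G p) : p.length ≤ Fintype.card V := by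
  simpa using hp.nodup_map_fst.length_le_card

theorem isLegalSeq (hp : IsFootprintSeq G p) : IsLegalSeq G (p.map Prod.fst) := by
  refine ⟨hp.nodup_map_fst, fun i _ => ⟨p[i.1].2, ?_, fun j hji => ?_⟩⟩
  · simpa using hp.1 _ (List.getElem_mem _)
  · simpa using List.pairwise_iff_getElem.1 hp.2 j i (by simpa using j.2) (by simpa using i.2) hji

theorem sublist (hp : IsFootprintSeq G p) (hqp : q.Sublist p) : IsFootprintSeq G q :=
  ⟨fun x hx => hp.1 x (hqp.subset hx), hp.2.sublist hqp⟩

theorem reverse_map_swap (hp : IsFootprintSeq G p) :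
    IsFootprintSeq G (p.reverse.map Prod.swap) := by
  refine ⟨fun x hx => ?_, ?_⟩
  · obtain ⟨y, hy, rfl⟩ := List.mem_map.1 hx
    exact (hp.1 y (List.mem_reverse.1 hy)).symm
  rw [List.pairwise_map, List.pairwise_reverse]
  exact hp.2.imp fun hxy hyx => hxy hyx.symm

end IsFootprintSeq

theorem isFootprintSeq_append {p q : List (V × V)} :
    IsFootprintSeq G (p ++ q) ↔
      IsFootprintSeq G p ∧ IsFootprintSeq G q ∧ ∀ x ∈ p, ∀ y ∈ q, ¬ G.Adj x.1 y.2 := by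
  simp only [IsFootprintSeq, List.pairwise_append, List.mem_append, or_imp, forall_and]
  tauto

theorem IsLegalSeq.exists_footprintSeq (hiso : NoIsolatedVerts G) {l : List V}
    (hl : IsLegalSeq G l) : ∃ p, IsFootprintSeq G p ∧ p.map Prod.fst = l := by
  have hfoot : ∀ i : Fin l.length, ∃ w, G.Adj (l.get i) w ∧
      ∀ j : Fin l.length, j < i → ¬ G.Adj (l.get j) w := by
    intro i
    rcases Nat.eq_zero_or_pos i with hi | hi
    · obtain ⟨w, hw⟩ := hiso (l.get i)
      exact ⟨w, hw, fun j hji => absurd hji (by omega)⟩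
    · exact hl.2 i hi
  choose w hadj hnadj using hfoot
  refine ⟨List.ofFn fun i => (l.get i, w i), ⟨?_, ?_⟩, ?_⟩
  · simpa [List.forall_mem_ofFn_iff] using hadj
  · exact List.pairwise_ofFn.2 fun i j hij => hnadj j i hij
  · simp [List.map_ofFn, Function.comp_def]

theorem bddAbove_totalDomSeq_lengths [Fintype V] :
    BddAbove {k : ℕ | ∃ l : List V, IsTotalDomSeq G l ∧ l.length = k} :=
  ⟨Fintype.card V, by rintro _ ⟨l, hl, rfl⟩; exact hl.1.1.length_le_card⟩

theorem le_grundyTotalDomNum [Fintype V] {l : List V} (hl : IsTotalDomSeq G l) :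
    l.length ≤ grundyTotalDomNum G :=
  le_csSup bddAbove_totalDomSeq_lengths ⟨l, hl, rfl⟩

/-- The part inside `A` of a total dominating sequence of a bipartite graph with sides `A`, `B`,
recorded with footprints. -/
def IsHalfTotalDomSeq (G : SimpleGraph V) (A B : Set V) (p : List (V × V)) : Prop :=
  IsFootprintSeq G p ∧ (∀ x ∈ p, x.1 ∈ A) ∧ ∀ b ∈ B, ∃ x ∈ p, G.Adj b x.1

namespace IsBipartitionOf

variable {A B : Set V}

theorem symm (hAB : IsBipartitionOf G A B) : IsBipartitionOf G B A :=
  ⟨fun v => (hAB.1 v).symm, fun _ _ huv => (hAB.2 huv).symm⟩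

theorem mem_right_iff_notMem_left (hAB : IsBipartitionOf G A B) {v : V} : v ∈ B ↔ v ∉ A := by
  rcases hAB.1 v with h | h <;> simp [h]

theorem mem_right_of_adj (hAB : IsBipartitionOf G A B) {u v : V} (hu : u ∈ A)
    (huv : G.Adj u v) : v ∈ B := by
  rcases hAB.2 huv with h | h
  · exact h.2
  · exact absurd hu (hAB.mem_right_iff_notMem_left.1 h.1)

theorem not_adj_of_mem_left (hAB : IsBipartitionOf G A B) {u v : V} (hu : u ∈ A) (hv : v ∈ A) :
    ¬ G.Adj u v :=
  fun huv => hAB.mem_right_iff_notMem_left.1 (hAB.mem_right_of_adj hu huv) hv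

theorem snd_mem_of_isHalfTotalDomSeq (hAB : IsBipartitionOf G A B) {p : List (V × V)}
    (hp : IsHalfTotalDomSeq G A B p) : ∀ x ∈ p, x.2 ∈ B :=
  fun x hx => hAB.mem_right_of_adj (hp.2.1 x hx) (hp.1.1 x hx)

theorem isHalfTotalDomSeq_filter [DecidablePred (· ∈ A)] (hAB : IsBipartitionOf G A B)
    {p : List (V × V)} (hp : IsFootprintSeq G p) (hdom : IsTotalDomSet G {v | v ∈ p.map Prod.fst}) :
    IsHalfTotalDomSeq G A B (p.filter fun x => x.1 ∈ A) := by
  refine ⟨hp.sublist List.filter_sublist, fun x hx => by simpa using (List.mem_filter.1 hx).2,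
    fun b hb => ?_⟩
  obtain ⟨_, hu, hbu⟩ := hdom b
  obtain ⟨x, hx, rfl⟩ := List.mem_map.1 hu
  exact ⟨x, List.mem_filter.2 ⟨hx, by simpa using hAB.symm.mem_right_of_adj hb hbu⟩, hbu⟩

theorem exists_halfTotalDomSeqs (hAB : IsBipartitionOf G A B) (hiso : NoIsolatedVerts G)
    {l : List V} (hl : IsTotalDomSeq G l) :
    ∃ p q, IsHalfTotalDomSeq G A B p ∧ IsHalfTotalDomSeq G B A q ∧
      l.length = p.length + q.length := by
  classical
  obtain ⟨p, hp, rfl⟩ := hl.1.exists_footprintSeq hiso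
  refine ⟨_, _, hAB.isHalfTotalDomSeq_filter hp hl.2, hAB.symm.isHalfTotalDomSeq_filter hp hl.2,
    ?_⟩
  rw [List.length_map, List.length_eq_length_filter_add fun x => x.1 ∈ A]
  congr 2
  exact List.filter_congr fun x _ => by simp [hAB.mem_right_iff_notMem_left]

/-- Greedy extension: while some `b ∈ B` is not dominated, append a neighbour `a` of `b`
with footprint `b`. -/
theorem exists_halfTotalDomSeq_of_footprintSeq [Fintype V] (hAB : IsBipartitionOf G A B)
    (hiso : NoIsolatedVerts G) {p : List (V × V)} (hp : IsFootprintSeq G p)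
    (hpA : ∀ x ∈ p, x.1 ∈ A) :
    ∃ q, IsHalfTotalDomSeq G A B q ∧ p.length ≤ q.length := by
  by_cases hdom : ∀ b ∈ B, ∃ x ∈ p, G.Adj b x.1
  · exact ⟨p, ⟨hp, hpA, hdom⟩, le_rfl⟩
  push Not at hdom
  obtain ⟨b, hb, hbp⟩ := hdom
  obtain ⟨a, hba⟩ := hiso b
  have hext : IsFootprintSeq G (p ++ [(a, b)]) :=
    isFootprintSeq_append.2 ⟨hp, ⟨by simpa using hba.symm, by simp⟩,
      fun x hx _ hy => by simpa [List.mem_singleton.1 hy] using fun h => hbp x hx h.symm⟩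
  have hextA : ∀ x ∈ p ++ [(a, b)], x.1 ∈ A := by
    intro x hx
    rcases List.mem_append.1 hx with hx | hx
    · exact hpA x hx
    · rw [List.mem_singleton.1 hx]
      exact hAB.symm.mem_right_of_adj hb hba
  have hcard := hext.length_le_card
  obtain ⟨q, hq, hlen⟩ := hAB.exists_halfTotalDomSeq_of_footprintSeq hiso hext hextA
  exact ⟨q, hq, by simp only [List.length_append, List.length_singleton] at hlen; omega⟩
termination_by Fintype.card V - p.length
decreasing_by simp only [List.length_append, List.length_singleton] at hcard ⊢; omega

theorem exists_totalDomSeq_of_halfTotalDomSeq [Fintype V] (hAB : IsBipartitionOf G A B)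
    (hiso : NoIsolatedVerts G) {q : List (V × V)} (hq : IsHalfTotalDomSeq G B A q) :
    ∃ l, IsTotalDomSeq G l ∧ 2 * q.length ≤ l.length := by
  obtain ⟨r, ⟨hr, hrA, hrB⟩, hlen⟩ := hAB.exists_halfTotalDomSeq_of_footprintSeq hiso
    hq.1.reverse_map_swap fun x hx => by
      obtain ⟨y, hy, rfl⟩ := List.mem_map.1 hx
      exact hAB.symm.snd_mem_of_isHalfTotalDomSeq hq y (List.mem_reverse.1 hy)
  have hrq : IsFootprintSeq G (r ++ q) := isFootprintSeq_append.2 ⟨hr, hq.1, fun x hx y hy =>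
    hAB.not_adj_of_mem_left (hrA x hx) (hAB.symm.snd_mem_of_isHalfTotalDomSeq hq y hy)⟩
  have hrq_len : 2 * q.length ≤ ((r ++ q).map Prod.fst).length := by
    simp only [List.length_map, List.length_reverse, List.length_append] at hlen ⊢
    omega
  refine ⟨_, ⟨hrq.isLegalSeq, fun v => ?_⟩, hrq_len⟩
  obtain ⟨x, hx, hvx⟩ : ∃ x ∈ r ++ q, G.Adj v x.1 := by
    rcases hAB.1 v with hv | hv
    · obtain ⟨x, hx, hvx⟩ := hq.2.2 v hv.1
      exact ⟨x, List.mem_append_right r hx, hvx⟩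
    · obtain ⟨x, hx, hvx⟩ := hrB v hv.1
      exact ⟨x, List.mem_append_left q hx, hvx⟩
  exact ⟨x.1, List.mem_map_of_mem hx, hvx⟩

theorem two_mul_length_le_grundyTotalDomNum [Fintype V] (hAB : IsBipartitionOf G A B)
    (hiso : NoIsolatedVerts G) {q : List (V × V)} (hq : IsHalfTotalDomSeq G B A q) :
    2 * q.length ≤ grundyTotalDomNum G := by
  obtain ⟨l, hl, hlen⟩ := hAB.exists_totalDomSeq_of_halfTotalDomSeq hiso hq
  exact hlen.trans (le_grundyTotalDomNum hl)

theorem exists_totalDomSeq_length_eq_grundyTotalDomNum [Fintype V]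
    (hAB : IsBipartitionOf G A B) (hiso : NoIsolatedVerts G) :
    ∃ l, IsTotalDomSeq G l ∧ l.length = grundyTotalDomNum G := by
  obtain ⟨q, hq, -⟩ := hAB.symm.exists_halfTotalDomSeq_of_footprintSeq hiso (p := [])
    ⟨by simp, List.Pairwise.nil⟩ (by simp)
  obtain ⟨l, hl, -⟩ := hAB.exists_totalDomSeq_of_halfTotalDomSeq hiso hq
  exact Nat.sSup_mem (s := {k | ∃ l : List V, IsTotalDomSeq G l ∧ l.length = k})
    ⟨_, l, hl, rfl⟩ bddAbove_totalDomSeq_lengths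

end IsBipartitionOf

end

/-- The Grundy total domination number of a bipartite graph
without isolated vertices is even. -/
theorem grundy_total_dom_even_of_bipartite {V : Type*} [Fintype V] (G : SimpleGraph V)
    (hbip : ∃ A B : Set V, IsBipartitionOf G A B)
    (hiso : NoIsolatedVerts G) :
    Even (grundyTotalDomNum G) := by
  obtain ⟨A, B, hAB⟩ := hbip
  obtain ⟨l, hl, hlen⟩ := hAB.exists_totalDomSeq_length_eq_grundyTotalDomNum hiso
  obtain ⟨p, q, hp, hq, hsplit⟩ := hAB.exists_halfTotalDomSeqs hiso hl
  have hqle := hAB.two_mul_length_le_grundyTotalDomNum hiso hq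
  have hple := hAB.symm.two_mul_length_le_grundyTotalDomNum hiso hp
  exact ⟨p.length, by omega⟩
end

section
/- For every n ≥ 2, the graph K_{n,n} − M obtained from the complete bipartite graph K_{n,n} by deleting the edges of a perfect matching M satisfies γ_t(K_{n,n} − M) = 4 and γ_gr^t(K_{n,n} − M) = 4. -/
/-- The graph `K_{n,n} − M`: the complete bipartite graph `K_{n,n}` minus a
perfect matching `M` (all perfect matchings give isomorphic graphs; here the
matching matches `Sum.inl i` with `Sum.inr i`). -/
def KnnMinusMatching (n : ℕ) : SimpleGraph (Fin n ⊕ Fin n) :=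
  SimpleGraph.fromRel (fun x y =>
    match x, y with
    | Sum.inl i, Sum.inr j => i ≠ j
    | _, _ => False)

lemma adj_lr {n : ℕ} {i j : Fin n} : (KnnMinusMatching n).Adj (Sum.inl i) (Sum.inr j) ↔ i ≠ j := by
  simp [KnnMinusMatching, SimpleGraph.fromRel_adj]

lemma adj_rl {n : ℕ} {i j : Fin n} : (KnnMinusMatching n).Adj (Sum.inr i) (Sum.inl j) ↔ j ≠ i := by
  simp [KnnMinusMatching, SimpleGraph.fromRel_adj]

lemma not_adj_ll {n : ℕ} {i j : Fin n} : ¬ (KnnMinusMatching n).Adj (Sum.inl i) (Sum.inl j) := by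
  simp [KnnMinusMatching, SimpleGraph.fromRel_adj]

lemma not_adj_rr {n : ℕ} {i j : Fin n} : ¬ (KnnMinusMatching n).Adj (Sum.inr i) (Sum.inr j) := by
  simp [KnnMinusMatching, SimpleGraph.fromRel_adj]

-- three lefts impossible
lemma no_three_left {n : ℕ} {l : List (Fin n ⊕ Fin n)}
    (hl : IsLegalSeq (KnnMinusMatching n) l)
    {j1 j2 j3 : Fin l.length} (h13 : j1 < j3) (h23 : j2 < j3) (h12 : j1 ≠ j2)
    {a b c : Fin n} (ha : l.get j1 = Sum.inl a) (hb : l.get j2 = Sum.inl b)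
    (hc : l.get j3 = Sum.inl c) : False := by
  obtain ⟨hnd, hleg⟩ := hl
  have hinj := List.nodup_iff_injective_get.1 hnd
  have hab : a ≠ b := by
    intro h; apply h12; apply hinj; rw [ha, hb, h]
  obtain ⟨w, hw, hw2⟩ := hleg j3 (by exact lt_of_le_of_lt (Nat.zero_le _) h13)
  rw [hc] at hw
  cases w with
  | inl d => exact not_adj_ll hw
  | inr d =>
    rcases ne_or_eq a d with h | h
    · exact hw2 j1 h13 (by rw [ha]; exact adj_lr.2 h)
    · exact hw2 j2 h23 (by rw [hb]; exact adj_lr.2 (by rw [← h]; exact fun e => hab e.symm))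

lemma no_three_right {n : ℕ} {l : List (Fin n ⊕ Fin n)}
    (hl : IsLegalSeq (KnnMinusMatching n) l)
    {j1 j2 j3 : Fin l.length} (h13 : j1 < j3) (h23 : j2 < j3) (h12 : j1 ≠ j2)
    {a b c : Fin n} (ha : l.get j1 = Sum.inr a) (hb : l.get j2 = Sum.inr b)
    (hc : l.get j3 = Sum.inr c) : False := by
  obtain ⟨hnd, hleg⟩ := hl
  have hinj := List.nodup_iff_injective_get.1 hnd
  have hab : a ≠ b := by
    intro h; apply h12; apply hinj; rw [ha, hb, h]
  obtain ⟨w, hw, hw2⟩ := hleg j3 (by exact lt_of_le_of_lt (Nat.zero_le _) h13)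
  rw [hc] at hw
  cases w with
  | inr d => exact not_adj_rr hw
  | inl d =>
    rcases ne_or_eq d a with h | h
    · exact hw2 j1 h13 (by rw [ha]; exact adj_rl.2 h)
    · exact hw2 j2 h23 (by rw [hb]; exact adj_rl.2 (by rw [h]; exact hab))

lemma legal_len_le {n : ℕ} {l : List (Fin n ⊕ Fin n)}
    (hl : IsLegalSeq (KnnMinusMatching n) l) : l.length ≤ 4 := by
  classical
  by_contra h
  push_neg at h
  -- among any 3-element subset of positions all on the same side, contradiction
  have key : ∀ (s : Finset (Fin l.length)), 2 < s.card →
      (∀ j ∈ s, (l.get j).isLeft) ∨ (∀ j ∈ s, (l.get j).isRight) → False := by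
    intro s hs hside
    have hne : s.Nonempty := Finset.card_pos.1 (by omega)
    set j3 := s.max' hne with hj3def
    have hj3 : j3 ∈ s := s.max'_mem hne
    have hcard : 1 < (s.erase j3).card := by
      have := Finset.card_erase_of_mem hj3; omega
    obtain ⟨j1, hj1, j2, hj2, h12⟩ := Finset.one_lt_card.1 hcard
    have h13 : j1 < j3 := lt_of_le_of_ne (s.le_max' _ (Finset.mem_of_mem_erase hj1))
      (Finset.ne_of_mem_erase hj1)
    have h23 : j2 < j3 := lt_of_le_of_ne (s.le_max' _ (Finset.mem_of_mem_erase hj2))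
      (Finset.ne_of_mem_erase hj2)
    rcases hside with hL | hR
    · obtain ⟨a, ha⟩ := Sum.isLeft_iff.1 (hL j1 (Finset.mem_of_mem_erase hj1))
      obtain ⟨b, hb⟩ := Sum.isLeft_iff.1 (hL j2 (Finset.mem_of_mem_erase hj2))
      obtain ⟨c, hc⟩ := Sum.isLeft_iff.1 (hL j3 hj3)
      exact no_three_left hl h13 h23 h12 ha hb hc
    · obtain ⟨a, ha⟩ := Sum.isRight_iff.1 (hR j1 (Finset.mem_of_mem_erase hj1))
      obtain ⟨b, hb⟩ := Sum.isRight_iff.1 (hR j2 (Finset.mem_of_mem_erase hj2))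
      obtain ⟨c, hc⟩ := Sum.isRight_iff.1 (hR j3 hj3)
      exact no_three_right hl h13 h23 h12 ha hb hc
  let L : Finset (Fin l.length) := Finset.univ.filter (fun i => (l.get i).isLeft)
  let R : Finset (Fin l.length) := Finset.univ.filter (fun i => ¬(l.get i).isLeft)
  have hLR : L.card + R.card = l.length := by
    rw [Finset.card_filter_add_card_filter_not]
    simp
  have hLle : L.card ≤ 2 := by
    by_contra hL
    exact key L (by omega) (Or.inl (fun j hj => (Finset.mem_filter.1 hj).2))
  have hRle : R.card ≤ 2 := by
    by_contra hR
    refine key R (by omega) (Or.inr (fun j hj => ?_))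
    have := (Finset.mem_filter.1 hj).2
    exact Sum.not_isLeft.1 this
  omega

lemma card_lb {n : ℕ} (hn : 2 ≤ n) {S : Set (Fin n ⊕ Fin n)}
    (hS : IsTotalDomSet (KnnMinusMatching n) S) : 4 ≤ S.ncard := by
  have extr_l : ∀ i : Fin n, ∃ j, j ≠ i ∧ Sum.inr j ∈ S := by
    intro i
    obtain ⟨u, hu, hadj⟩ := hS (Sum.inl i)
    cases u with
    | inl a => exact absurd hadj not_adj_ll
    | inr a => exact ⟨a, Ne.symm (adj_lr.1 hadj), hu⟩
  have extr_r : ∀ i : Fin n, ∃ j, j ≠ i ∧ Sum.inl j ∈ S := by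
    intro i
    obtain ⟨u, hu, hadj⟩ := hS (Sum.inr i)
    cases u with
    | inr a => exact absurd hadj not_adj_rr
    | inl a => exact ⟨a, adj_rl.1 hadj, hu⟩
  have i0 : Fin n := ⟨0, by omega⟩
  obtain ⟨j1, hj1ne, hj1⟩ := extr_l i0
  obtain ⟨j2, hj2ne, hj2⟩ := extr_l j1
  obtain ⟨i1, hi1ne, hi1⟩ := extr_r i0
  obtain ⟨i2, hi2ne, hi2⟩ := extr_r i1
  have hsub : (↑({Sum.inl i1, Sum.inl i2, Sum.inr j1, Sum.inr j2} :
      Finset (Fin n ⊕ Fin n)) : Set (Fin n ⊕ Fin n)) ⊆ S := by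
    intro x hx
    simp only [Finset.coe_insert, Finset.coe_singleton, Set.mem_insert_iff,
      Set.mem_singleton_iff] at hx
    rcases hx with h | h | h | h <;> subst h <;> assumption
  have hcard : ({Sum.inl i1, Sum.inl i2, Sum.inr j1, Sum.inr j2} :
      Finset (Fin n ⊕ Fin n)).card = 4 := by
    rw [Finset.card_insert_of_notMem (by simp [hi2ne.symm]),
      Finset.card_insert_of_notMem (by simp),
      Finset.card_insert_of_notMem (by simp [hj2ne.symm]),
      Finset.card_singleton]
  calc 4 = (↑({Sum.inl i1, Sum.inl i2, Sum.inr j1, Sum.inr j2} :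
      Finset (Fin n ⊕ Fin n)) : Set (Fin n ⊕ Fin n)).ncard := by
        rw [Set.ncard_coe_finset, hcard]
    _ ≤ S.ncard := Set.ncard_le_ncard hsub (Set.toFinite S)

section Witness
variable {n : ℕ} (hn : 2 ≤ n)

lemma witness_seq (hn : 2 ≤ n) :
    ∃ l : List (Fin n ⊕ Fin n), IsTotalDomSeq (KnnMinusMatching n) l ∧ l.length = 4 := by
  set a0 : Fin n := ⟨0, by omega⟩ with ha0
  set a1 : Fin n := ⟨1, by omega⟩ with ha1
  have hne : a0 ≠ a1 := by simp [ha0, ha1, Fin.ext_iff]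
  refine ⟨[Sum.inl a0, Sum.inl a1, Sum.inr a0, Sum.inr a1], ⟨⟨?_, ?_⟩, ?_⟩, rfl⟩
  · simp [hne]
  · intro i hi
    fin_cases i
    · simp at hi
    · refine ⟨Sum.inr a0, adj_lr.2 hne.symm, ?_⟩
      intro j hj
      fin_cases j <;> simp_all [adj_lr, adj_rl, not_adj_ll, not_adj_rr]
    · refine ⟨Sum.inl a1, adj_rl.2 hne.symm, ?_⟩
      intro j hj
      fin_cases j <;> simp_all [adj_lr, adj_rl, not_adj_ll, not_adj_rr]
    · refine ⟨Sum.inl a0, adj_rl.2 hne, ?_⟩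
      intro j hj
      fin_cases j <;> simp_all [adj_lr, adj_rl, not_adj_ll, not_adj_rr]
  · intro v
    cases v with
    | inl i =>
      rcases ne_or_eq i a0 with h | h
      · exact ⟨Sum.inr a0, by simp, adj_lr.2 h⟩
      · exact ⟨Sum.inr a1, by simp, adj_lr.2 (h ▸ hne)⟩
    | inr i =>
      rcases ne_or_eq a0 i with h | h
      · exact ⟨Sum.inl a0, by simp, adj_rl.2 h⟩
      · exact ⟨Sum.inl a1, by simp, adj_rl.2 (h ▸ hne.symm)⟩

end Witness

/-- For every `n ≥ 2`, the graph `K_{n,n} − M` satisfies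
`γ_t = 4` and `γ_gr^t = 4`. -/
theorem total_dom_and_grundy_of_KnnMinusMatching (n : ℕ) (hn : 2 ≤ n) :
    totalDomNum (KnnMinusMatching n) = 4 ∧ grundyTotalDomNum (KnnMinusMatching n) = 4 := by
  obtain ⟨l, hl, hlen⟩ := witness_seq hn
  constructor
  · -- total domination number
    have h4 : 4 ∈ {k : ℕ | ∃ S : Set (Fin n ⊕ Fin n),
        IsTotalDomSet (KnnMinusMatching n) S ∧ S.ncard = 4} := by
      set a0 : Fin n := ⟨0, by omega⟩ with ha0
      set a1 : Fin n := ⟨1, by omega⟩ with ha1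
      have hne : a0 ≠ a1 := by simp [ha0, ha1, Fin.ext_iff]
      refine ⟨(↑({Sum.inl a0, Sum.inl a1, Sum.inr a0, Sum.inr a1} :
        Finset (Fin n ⊕ Fin n)) : Set (Fin n ⊕ Fin n)), ?_, ?_⟩
      · intro v
        cases v with
        | inl i =>
          rcases ne_or_eq i a0 with h | h
          · exact ⟨Sum.inr a0, by simp, adj_lr.2 h⟩
          · exact ⟨Sum.inr a1, by simp, adj_lr.2 (h ▸ hne)⟩
        | inr i =>
          rcases ne_or_eq a0 i with h | h
          · exact ⟨Sum.inl a0, by simp, adj_rl.2 h⟩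
          · exact ⟨Sum.inl a1, by simp, adj_rl.2 (h ▸ hne.symm)⟩
      · rw [Set.ncard_coe_finset]
        rw [Finset.card_insert_of_notMem (by simp [hne]),
          Finset.card_insert_of_notMem (by simp),
          Finset.card_insert_of_notMem (by simp [hne]),
          Finset.card_singleton]
    refine le_antisymm (Nat.sInf_le h4) (le_csInf ⟨4, h4⟩ ?_)
    rintro k ⟨S, hS, rfl⟩
    exact card_lb hn hS
  · have h4 : (4 : ℕ) ∈ {k : ℕ | ∃ l : List (Fin n ⊕ Fin n),
        IsTotalDomSeq (KnnMinusMatching n) l ∧ l.length = k} := ⟨l, hl, hlen⟩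
    refine le_antisymm (csSup_le ⟨4, h4⟩ ?_) (le_csSup ⟨4, ?_⟩ h4)
    · rintro k ⟨l', hl', rfl⟩
      exact legal_len_le hl'.1
    · rintro k ⟨l', hl', rfl⟩
      exact legal_len_le hl'.1
end

section
/- Let G be a graph without isolated vertices, let v be a vertex of G, and let G' be the graph obtained from G by adding a new vertex u and joining u to every vertex of N_G(v). Then γ_t(G') = γ_t(G) and γ_gr^t(G') = γ_gr^t(G). -/
/-- The graph obtained from `G` by adding a new vertex (`none`) joined to every
vertex of `N_G(v)`. -/
def addFalseTwin {V : Type*} (G : SimpleGraph V) (v : V) : SimpleGraph (Option V) :=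
  SimpleGraph.fromRel (fun x y =>
    match x, y with
    | some a, some b => G.Adj a b
    | none, some a => G.Adj v a
    | _, _ => False)

/-!
The graph with the false twin added is the pullback `G.comap f` of `G` along the map
`f = Option.getD · v`, which folds the new vertex onto `v` and has the section `some`. Total
dominating sets and legal sequences transfer both ways: along the section they are copied
verbatim, and along `f` they are pushed forward, because adjacency in the pullback depends only on
`f`-images. Pushing forward cannot create repetitions in a legal sequence, as a later entry with
the same image as an earlier one would have no new neighbour. Hence both parameters agree.
-/

section Comap

open SimpleGraph

variable {V W : Type*} {G : SimpleGraph V} {f : W → V}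

lemma IsTotalDomSet.comap_image {g : V → W} (hfg : Function.LeftInverse f g) {S : Set V}
    (hS : IsTotalDomSet G S) : IsTotalDomSet (G.comap f) (g '' S) := by
  intro x
  obtain ⟨u, hu, hxu⟩ := hS (f x)
  exact ⟨g u, Set.mem_image_of_mem g hu, by simpa [hfg u] using hxu⟩

lemma IsTotalDomSet.image_of_comap (hf : Function.Surjective f) {S : Set W}
    (hS : IsTotalDomSet (G.comap f) S) : IsTotalDomSet G (f '' S) := by
  intro x
  obtain ⟨y, rfl⟩ := hf x
  obtain ⟨u, hu, hyu⟩ := hS y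
  exact ⟨f u, Set.mem_image_of_mem f hu, hyu⟩

lemma IsLegalSeq.map_comap {g : V → W} (hfg : Function.LeftInverse f g) {l : List V}
    (hl : IsLegalSeq G l) : IsLegalSeq (G.comap f) (l.map g) := by
  obtain ⟨hnd, hnew⟩ := hl
  refine ⟨hnd.map hfg.injective, fun i hi => ?_⟩
  obtain ⟨w, hiw, hw⟩ := hnew (i.cast (List.length_map _)) hi
  refine ⟨g w, by simpa [hfg _] using hiw, fun j hj => ?_⟩
  simpa [hfg _] using hw (j.cast (List.length_map _)) hj

lemma IsLegalSeq.map_of_comap {l : List W} (hl : IsLegalSeq (G.comap f) l) :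
    IsLegalSeq G (l.map f) := by
  obtain ⟨-, hnew⟩ := hl
  -- the new neighbour of the later entry would already be dominated by the earlier one
  have hf_ne : ∀ i j : Fin l.length, i < j → f (l.get i) ≠ f (l.get j) := by
    intro i j hij hfij
    obtain ⟨w, hjw, hw⟩ := hnew j (Nat.zero_le _ |>.trans_lt hij)
    exact hw i hij (by rw [comap_adj, hfij]; exact hjw)
  refine ⟨List.pairwise_map.mpr (List.pairwise_iff_get.mpr hf_ne), fun i hi => ?_⟩
  obtain ⟨w, hiw, hw⟩ := hnew (i.cast (List.length_map _)) hi
  exact ⟨f w, by simpa using hiw, fun j hj => by simpa using hw (j.cast (List.length_map _)) hj⟩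

lemma List.setOf_mem_map {l : List W} : {x | x ∈ l.map f} = f '' {x | x ∈ l} := by
  ext
  simp

lemma IsTotalDomSeq.map_comap {g : V → W} (hfg : Function.LeftInverse f g) {l : List V}
    (hl : IsTotalDomSeq G l) : IsTotalDomSeq (G.comap f) (l.map g) :=
  ⟨hl.1.map_comap hfg, by rw [List.setOf_mem_map]; exact hl.2.comap_image hfg⟩

lemma IsTotalDomSeq.map_of_comap (hf : Function.Surjective f) {l : List W}
    (hl : IsTotalDomSeq (G.comap f) l) : IsTotalDomSeq G (l.map f) :=
  ⟨hl.1.map_of_comap, by rw [List.setOf_mem_map]; exact hl.2.image_of_comap hf⟩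

lemma totalDomNum_comap [Finite W] {g : V → W} (hfg : Function.LeftInverse f g) :
    totalDomNum (G.comap f) = totalDomNum G := by
  apply csInf_eq_csInf_of_forall_exists_le
  · rintro _ ⟨S, hS, rfl⟩
    exact ⟨_, ⟨f '' S, hS.image_of_comap hfg.surjective, rfl⟩, Set.ncard_image_le S.toFinite⟩
  · rintro _ ⟨S, hS, rfl⟩
    exact ⟨_, ⟨g '' S, hS.comap_image hfg, rfl⟩, (Set.ncard_image_of_injective S hfg.injective).le⟩

lemma grundyTotalDomNum_comap {g : V → W} (hfg : Function.LeftInverse f g) :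
    grundyTotalDomNum (G.comap f) = grundyTotalDomNum G := by
  refine congrArg sSup (Set.ext fun k => ⟨?_, ?_⟩)
  · rintro ⟨l, hl, rfl⟩
    exact ⟨l.map f, hl.map_of_comap hfg.surjective, List.length_map _⟩
  · rintro ⟨l, hl, rfl⟩
    exact ⟨l.map g, hl.map_comap hfg, List.length_map _⟩

end Comap

lemma addFalseTwin_eq_comap {V : Type*} (G : SimpleGraph V) (v : V) :
    addFalseTwin G v = G.comap (·.getD v) := by
  ext x y
  cases x <;> cases y <;> simp [addFalseTwin, G.adj_comm]
  exact G.ne_of_adj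

theorem total_dom_and_grundy_addFalseTwin_general {V : Type*} [Fintype V] (G : SimpleGraph V)
    (v : V) :
    totalDomNum (addFalseTwin G v) = totalDomNum G ∧
    grundyTotalDomNum (addFalseTwin G v) = grundyTotalDomNum G := by
  have hsection : Function.LeftInverse (·.getD v) (some : V → Option V) := fun _ => rfl
  rw [addFalseTwin_eq_comap]
  exact ⟨totalDomNum_comap hsection, grundyTotalDomNum_comap hsection⟩

/-- Adding a false twin of a vertex `v` (a new vertex joined to
all of `N_G(v)`) changes neither the total domination number nor the Grundy
total domination number. -/
theorem total_dom_and_grundy_addFalseTwin {V : Type*} [Fintype V] (G : SimpleGraph V)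
    (hiso : NoIsolatedVerts G) (v : V) :
    totalDomNum (addFalseTwin G v) = totalDomNum G ∧
    grundyTotalDomNum (addFalseTwin G v) = grundyTotalDomNum G :=
  total_dom_and_grundy_addFalseTwin_general G v
end

section
/- Let s ≥ 2 and q ≥ 2 be integers. If an orthogonal array OA(s, q) exists, then s ≤ q + 1. -/
/-- An orthogonal array `OA(s, q)`: a `q² × s` array with entries from `Fin q`
such that within any two distinct columns, every ordered pair of symbols
occurs in exactly one row. -/
def IsOrthogonalArray {s q : ℕ} (A : Fin (q ^ 2) → Fin s → Fin q) : Prop :=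
  ∀ j₁ j₂ : Fin s, j₁ ≠ j₂ → ∀ x y : Fin q, ∃! r : Fin (q ^ 2), A r j₁ = x ∧ A r j₂ = y

/-- If an orthogonal array `OA(s, q)` with `s ≥ 2`, `q ≥ 2` exists,
then `s ≤ q + 1`. -/
theorem orthogonalArray_cols_le {s q : ℕ} (hs : 2 ≤ s) (hq : 2 ≤ q)
    (A : Fin (q ^ 2) → Fin s → Fin q) (hA : IsOrthogonalArray A) :
    s ≤ q + 1 := by
  have hq2 : 0 < q ^ 2 := by positivity
  haveI : Nontrivial (Fin s) := Fin.nontrivial_iff_two_le.mpr hs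
  set r₀ : Fin (q ^ 2) := ⟨0, hq2⟩ with hr₀
  -- number of rows with a given symbol in a given column is q
  have hcard : ∀ j : Fin s, ∀ x : Fin q,
      (Finset.univ.filter (fun r => A r j = x)).card = q := by
    intro j x
    obtain ⟨j', hj'⟩ := exists_ne j
    have : (Finset.univ.filter (fun r => A r j = x)).card
        = (Finset.univ : Finset (Fin q)).card := by
      apply Finset.card_bij (fun r _ => A r j')
      · intros; exact Finset.mem_univ _
      · intro a ha b hb hab
        simp only [Finset.mem_filter] at ha hb
        obtain ⟨u, _, hun⟩ := hA j j' hj'.symm x (A a j')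
        have h1 := hun a ⟨ha.2, rfl⟩
        have h2 := hun b ⟨hb.2, hab.symm⟩
        rw [h1, h2]
      · intro y _
        obtain ⟨r, hr, _⟩ := hA j j' hj'.symm x y
        exact ⟨r, Finset.mem_filter.mpr ⟨Finset.mem_univ _, hr.1⟩, hr.2⟩
    simpa using this
  -- the sets of rows agreeing with r₀ in column j (other than r₀)
  set S : Fin s → Finset (Fin (q ^ 2)) :=
    fun j => (Finset.univ.filter (fun r => A r j = A r₀ j)).erase r₀ with hS
  have hScard : ∀ j, (S j).card = q - 1 := by
    intro j
    show ((Finset.univ.filter (fun r => A r j = A r₀ j)).erase r₀).card = q - 1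
    have hmem : r₀ ∈ Finset.univ.filter (fun r => A r j = A r₀ j) :=
      Finset.mem_filter.mpr ⟨Finset.mem_univ _, rfl⟩
    rw [Finset.card_erase_of_mem hmem]
    rw [hcard j (A r₀ j)]
  have hdisj : ∀ j₁ ∈ (Finset.univ : Finset (Fin s)), ∀ j₂ ∈ Finset.univ,
      j₁ ≠ j₂ → Disjoint (S j₁) (S j₂) := by
    intro j₁ _ j₂ _ hne
    rw [Finset.disjoint_left]
    intro r h1 h2
    simp only [hS, Finset.mem_erase, Finset.mem_filter] at h1 h2
    obtain ⟨u, _, hun⟩ := hA j₁ j₂ hne (A r₀ j₁) (A r₀ j₂)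
    have e1 := hun r ⟨h1.2.2, h2.2.2⟩
    have e2 := hun r₀ ⟨rfl, rfl⟩
    exact h1.1 (e1.trans e2.symm)
  have hsub : (Finset.univ : Finset (Fin s)).biUnion S ⊆ Finset.univ.erase r₀ := by
    intro r hr
    simp only [Finset.mem_biUnion, hS, Finset.mem_erase] at hr ⊢
    obtain ⟨j, _, hj⟩ := hr
    exact ⟨hj.1, Finset.mem_univ _⟩
  have hsum : s * (q - 1) ≤ q ^ 2 - 1 := by
    calc s * (q - 1) = ∑ j : Fin s, (S j).card := by
            simp [hScard, Finset.sum_const, mul_comm]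
      _ = ((Finset.univ : Finset (Fin s)).biUnion S).card :=
            (Finset.card_biUnion hdisj).symm
      _ ≤ (Finset.univ.erase r₀).card := Finset.card_le_card hsub
      _ = q ^ 2 - 1 := by
            rw [Finset.card_erase_of_mem (Finset.mem_univ _)]
            simp
  obtain ⟨n, rfl⟩ : ∃ n, q = n + 1 := ⟨q - 1, by omega⟩
  have hn : 0 < n := by omega
  have key : s * n ≤ (n + 2) * n := by
    have h1 : (n + 1) ^ 2 - 1 = (n + 2) * n := by
      have : (n + 1) ^ 2 = (n + 2) * n + 1 := by ring
      omega
    simpa [h1] using hsum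
  have := Nat.le_of_mul_le_mul_right key hn
  omega
end

section
/- Let q ≥ 2 be an integer and let A be an orthogonal array OA(q + 1, q). Then any two distinct rows of A agree in exactly one position; equivalently, the rows of A form a collection of q² words of length q + 1 over an alphabet of q letters such that every two distinct words coincide in exactly one place. -/
/-- In an orthogonal array `OA(q + 1, q)` with `q ≥ 2`, any two
distinct rows agree in exactly one position. -/
theorem orthogonalArray_rows_agree_unique {q : ℕ} (hq : 2 ≤ q)
    (A : Fin (q ^ 2) → Fin (q + 1) → Fin q) (hA : IsOrthogonalArray A)
    (r₁ r₂ : Fin (q ^ 2)) (hr : r₁ ≠ r₂) :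
    ∃! j : Fin (q + 1), A r₁ j = A r₂ j := by
  -- a row agreeing with r₁ in two distinct columns equals r₁
  have hatmost : ∀ (r : Fin (q ^ 2)) (j j' : Fin (q + 1)), j ≠ j' →
      A r j = A r₁ j → A r j' = A r₁ j' → r = r₁ := by
    intro r j j' hne h h'
    obtain ⟨rr, -, hu⟩ := hA j j' hne (A r₁ j) (A r₁ j')
    exact (hu r ⟨h, h'⟩).trans (hu r₁ ⟨rfl, rfl⟩).symm
  -- each symbol occurs exactly q times in each column
  have colcard : ∀ (j : Fin (q + 1)) (x : Fin q),
      (Finset.univ.filter (fun r => A r j = x)).card = q := by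
    intro j x
    have hnt : Nontrivial (Fin (q + 1)) := Fin.nontrivial_iff_two_le.mpr (by omega)
    obtain ⟨j₂, hj₂⟩ := exists_ne j
    have hb := Finset.card_bij
      (fun (r : Fin (q ^ 2)) (_ : r ∈ Finset.univ.filter (fun r => A r j = x)) => A r j₂)
      (fun r _ => Finset.mem_univ _)
      (fun a ha b hb hab => by
        simp only [Finset.mem_filter] at ha hb
        obtain ⟨rr, -, hu⟩ := hA j j₂ (Ne.symm hj₂) x (A a j₂)
        exact (hu a ⟨ha.2, rfl⟩).trans (hu b ⟨hb.2, hab.symm⟩).symm)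
      (fun y _ => by
        obtain ⟨rr, hrr, -⟩ := hA j j₂ (Ne.symm hj₂) x y
        exact ⟨rr, Finset.mem_filter.mpr ⟨Finset.mem_univ _, hrr.1⟩, hrr.2⟩)
    simpa using hb
  have hex : ∃ j, A r₁ j = A r₂ j := by
    by_contra hno
    push_neg at hno
    set S : Fin (q + 1) → Finset (Fin (q ^ 2)) :=
      fun j => (Finset.univ.filter (fun r => A r j = A r₁ j)).erase r₁ with hS
    have hScard : ∀ j, (S j).card = q - 1 := by
      intro j
      simp only [hS]
      have hm : r₁ ∈ Finset.univ.filter (fun r => A r j = A r₁ j) :=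
        Finset.mem_filter.mpr ⟨Finset.mem_univ _, rfl⟩
      rw [Finset.card_erase_of_mem hm, colcard]
    have hdisj : ∀ j ∈ (Finset.univ : Finset (Fin (q + 1))), ∀ j' ∈ Finset.univ,
        j ≠ j' → Disjoint (S j) (S j') := by
      intro j _ j' _ hne
      rw [Finset.disjoint_left]
      intro r hrj hrj'
      simp only [hS, Finset.mem_erase, Finset.mem_filter] at hrj hrj'
      exact hrj.1 (hatmost r j j' hne hrj.2.2 hrj'.2.2)
    have hsub : Finset.univ.biUnion S ⊆ (Finset.univ.erase r₁).erase r₂ := by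
      intro r hrm
      obtain ⟨j, -, hrj⟩ := Finset.mem_biUnion.mp hrm
      simp only [hS, Finset.mem_erase, Finset.mem_filter] at hrj
      refine Finset.mem_erase.mpr ⟨?_, Finset.mem_erase.mpr ⟨hrj.1, Finset.mem_univ _⟩⟩
      rintro rfl
      exact hno j hrj.2.2.symm
    have hcard1 : (Finset.univ.biUnion S).card = (q + 1) * (q - 1) := by
      rw [Finset.card_biUnion hdisj]
      simp [hScard, Finset.card_univ, mul_comm]
    have hcard2 : ((Finset.univ.erase r₁).erase r₂).card = q ^ 2 - 1 - 1 := by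
      rw [Finset.card_erase_of_mem (Finset.mem_erase.mpr ⟨hr.symm, Finset.mem_univ _⟩),
        Finset.card_erase_of_mem (Finset.mem_univ _)]
      simp
    have hle := Finset.card_le_card hsub
    rw [hcard1, hcard2] at hle
    obtain ⟨k, rfl⟩ := Nat.exists_eq_add_of_le hq
    have e0 : 2 + k - 1 = k + 1 := by omega
    have e1 : (2 + k + 1) * (2 + k - 1) = k * k + 4 * k + 3 := by rw [e0]; ring
    have e2 : (2 + k) ^ 2 = k * k + 4 * k + 4 := by ring
    rw [e1, e2] at hle
    omega
  obtain ⟨j, hj⟩ := hex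
  exact ⟨j, hj, fun j' hj' => by
    by_contra hne
    exact hr (hatmost r₂ j' j hne hj'.symm hj.symm).symm⟩
end
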